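/- Let u ∈ ℝ^d be a unit vector, U₀ ⊂ ℤ^d \ {0} a finite set with ⟨z,u⟩ < 0 for all z ∈ U₀, and set M = max_{z∈U₀} ‖z‖. Let u₁,…,u_d be linearly independent unit vectors in ℝ^d with ⟨z, u_i⟩ < 0 for all z ∈ U₀ and all i, write u_i = v_i + u_i' with ⟨v_i, u_j⟩ = 0 for j ≠ i, and let λ_i > 0, R ∈ ℕ with λ_i‖v_i‖² R > M for all i. For x ∈ ℤ^d define B̂_x = {a ∈ ℝ^d : ∀i, ⟨a,u_i⟩/(λ_i‖v_i‖²R) ∈ [x_i, x_i+1)}. Then U₀ + B̂_x ⊆ ⋃_{z∈{0,−1}^d} B̂_{x+z}. -/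

import Mathlib

/-!
Write `cᵢ = λᵢ‖vᵢ‖²R`. By Cauchy–Schwarz `|⟨z,uᵢ⟩| ≤ ‖z‖ ≤ M < cᵢ`, and `⟨z,uᵢ⟩ < 0`, so adding `z`
moves the normalised coordinate `⟨a,uᵢ⟩/cᵢ ∈ [xᵢ, xᵢ+1)` by an amount in `[-1, 0]`. The new
coordinate lies in `[xᵢ-1, xᵢ+1)`, so its integer part is `xᵢ + wᵢ` with `wᵢ ∈ {0,-1}`.
-/

open scoped BigOperators

/-- Dot product on `ℝ^d`. -/
def dotR {d : ℕ} (a b : Fin d → ℝ) : ℝ := ∑ i, a i * b i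

/-- Coercion `ℤ^d → ℝ^d`. -/
def toR {d : ℕ} (x : Fin d → ℤ) : Fin d → ℝ := fun i => (x i : ℝ)

theorem dotR_add_left {d : ℕ} (a b c : Fin d → ℝ) : dotR (a + b) c = dotR a c + dotR b c := by
  simp only [dotR, Pi.add_apply, add_mul, Finset.sum_add_distrib]

theorem dotR_sq_le {d : ℕ} (a b : Fin d → ℝ) : dotR a b ^ 2 ≤ dotR a a * dotR b b := by
  simpa only [dotR, sq] using Finset.sum_mul_sq_le_sq_mul_sq Finset.univ a b

theorem abs_dotR_le_sqrt_of_dotR_self_eq_one {d : ℕ} (a : Fin d → ℝ) {e : Fin d → ℝ}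
    (he : dotR e e = 1) : |dotR a e| ≤ Real.sqrt (dotR a a) :=
  Real.abs_le_sqrt (by simpa only [he, mul_one] using dotR_sq_le a e)

theorem add_div_mem_Ico_sub_one {c t s n : ℝ} (hc : 0 < c) (ht : t ∈ Set.Icc (-c) 0)
    (hs : s / c ∈ Set.Ico n (n + 1)) : (t + s) / c ∈ Set.Ico (n - 1) (n + 1) := by
  have htc : t / c ∈ Set.Icc (-1) 0 :=
    ⟨by rw [le_div_iff₀ hc]; linarith [ht.1], div_nonpos_of_nonpos_of_nonneg ht.2 hc.le⟩
  rw [add_div]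
  exact ⟨by linarith [htc.1, hs.1], by linarith [htc.2, hs.2]⟩

theorem floor_sub_eq_zero_or_neg_one {y : ℝ} {n : ℤ} (h : y ∈ Set.Ico ((n : ℝ) - 1) (n + 1)) :
    ⌊y⌋ - n = 0 ∨ ⌊y⌋ - n = -1 := by
  have hlo : n - 1 ≤ ⌊y⌋ := Int.le_floor.mpr (by exact_mod_cast h.1)
  have hhi : ⌊y⌋ < n + 1 := Int.floor_lt.mpr (by exact_mod_cast h.2)
  omega

theorem update_rule_box_containment_general {d : ℕ}
    (U₀ : Finset (Fin d → ℤ))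
    (M : ℝ) (hM : ∀ z ∈ U₀, Real.sqrt (dotR (toR z) (toR z)) ≤ M)
    (uu : Fin d → (Fin d → ℝ)) (huunit : ∀ i, dotR (uu i) (uu i) = 1)
    (hnegi : ∀ z ∈ U₀, ∀ i, dotR (toR z) (uu i) < 0)
    (v : Fin d → (Fin d → ℝ))
    (lam : Fin d → ℝ)
    (R : ℕ) (hR : ∀ i, M < lam i * dotR (v i) (v i) * R)
    (x : Fin d → ℤ) (z : Fin d → ℤ) (hz : z ∈ U₀) (a : Fin d → ℝ)
    (ha : ∀ i, dotR a (uu i) / (lam i * dotR (v i) (v i) * R)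
      ∈ Set.Ico ((x i : ℝ)) ((x i : ℝ) + 1)) :
    ∃ w : Fin d → ℤ, (∀ i, w i = 0 ∨ w i = -1) ∧
      ∀ i, dotR (toR z + a) (uu i) / (lam i * dotR (v i) (v i) * R)
        ∈ Set.Ico (((x + w) i : ℝ)) (((x + w) i : ℝ) + 1) := by
  set c := fun i => lam i * dotR (v i) (v i) * R
  have hzc : ∀ i, |dotR (toR z) (uu i)| < c i := fun i =>
    ((abs_dotR_le_sqrt_of_dotR_self_eq_one _ (huunit i)).trans (hM z hz)).trans_lt (hR i)
  have hq : ∀ i, dotR (toR z + a) (uu i) / c i ∈ Set.Ico ((x i : ℝ) - 1) (x i + 1) := by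
    intro i
    rw [dotR_add_left]
    exact add_div_mem_Ico_sub_one ((abs_nonneg _).trans_lt (hzc i))
      ⟨(neg_lt_of_abs_lt (hzc i)).le, (hnegi z hz i).le⟩ (ha i)
  refine ⟨fun i => ⌊dotR (toR z + a) (uu i) / c i⌋ - x i,
    fun i => floor_sub_eq_zero_or_neg_one (hq i), fun i => ?_⟩
  simp only [Pi.add_apply, add_sub_cancel]
  exact ⟨Int.floor_le _, Int.lt_floor_add_one _⟩

/-- Geometric containment `U₀ + B̂_x ⊆ ⋃_{w ∈ {0,-1}^d} B̂_{x+w}` for the tessellation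
`B̂_x = {a : ∀ i, ⟨a,uᵢ⟩/(λᵢ‖vᵢ‖²R) ∈ [xᵢ, xᵢ+1)}` adapted to directions `u₁,…,u_d`
close to `u`, when `λᵢ‖vᵢ‖²R > M = max_{z∈U₀}‖z‖`. -/
theorem update_rule_box_containment {d : ℕ}
    (u : Fin d → ℝ) (hu : dotR u u = 1)
    (U₀ : Finset (Fin d → ℤ)) (hU₀ : U₀.Nonempty) (h0 : (0 : Fin d → ℤ) ∉ U₀)
    (hneg : ∀ z ∈ U₀, dotR (toR z) u < 0)
    (M : ℝ) (hM : ∀ z ∈ U₀, Real.sqrt (dotR (toR z) (toR z)) ≤ M)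
    (uu : Fin d → (Fin d → ℝ)) (huunit : ∀ i, dotR (uu i) (uu i) = 1)
    (hlin : LinearIndependent ℝ uu)
    (hnegi : ∀ z ∈ U₀, ∀ i, dotR (toR z) (uu i) < 0)
    (v u' : Fin d → (Fin d → ℝ))
    (hdecomp : ∀ i, uu i = v i + u' i)
    (horth : ∀ i j, i ≠ j → dotR (v i) (uu j) = 0)
    (hspan : ∀ i, u' i ∈ Submodule.span ℝ {w | ∃ j, j ≠ i ∧ w = uu j})
    (lam : Fin d → ℝ) (hlam : ∀ i, 0 < lam i)
    (R : ℕ) (hR : ∀ i, M < lam i * dotR (v i) (v i) * R)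
    (x : Fin d → ℤ) (z : Fin d → ℤ) (hz : z ∈ U₀) (a : Fin d → ℝ)
    (ha : ∀ i, dotR a (uu i) / (lam i * dotR (v i) (v i) * R)
      ∈ Set.Ico ((x i : ℝ)) ((x i : ℝ) + 1)) :
    ∃ w : Fin d → ℤ, (∀ i, w i = 0 ∨ w i = -1) ∧
      ∀ i, dotR (toR z + a) (uu i) / (lam i * dotR (v i) (v i) * R)
        ∈ Set.Ico (((x + w) i : ℝ)) (((x + w) i : ℝ) + 1) :=
  update_rule_box_containment_general U₀ M hM uu huunit hnegi v lam R hR x z hz a ha
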